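/- For all integers n ≥ k ≥ 1, B_{n,k}(1/2, 1/3, …, 1/(n-k+2)) = n! · ∑_{ℓ=0}^{k} [(-1)^{k-ℓ} / ((k-ℓ)! · (n+ℓ)!)] · S(n+ℓ, ℓ), where S denotes the Stirling numbers of the second kind. -/

import Mathlib

/-!
Put `y i = x i / i!`. The multinomial theorem identifies `k! B_{n,k}(x) / n!` with the
coefficient of `t^n` in `(∑_{i ≥ 1} y i t^i)^k`. For `x i = 1/(i+1)` we have
`t ∑_{i ≥ 1} y i t^i = e^t - 1 - t`, so this is the coefficient of `t^(n+k)` in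
`(e^t - 1 - t)^k`. Expanding binomially in `e^t - 1` and `-t` and using
`[t^m] (e^t - 1)^l = l! S(m, l) / m!` gives the formula.
-/

open Finset

/-- Bell polynomials of the second kind: `bellB n k x` is
`B_{n,k}(x 1, x 2, …, x (n-k+1))`, summing over sequences of nonnegative
integers `ℓ 1, …` with `∑ i * ℓ i = n` and `∑ ℓ i = k`. -/
noncomputable def bellB (n k : ℕ) (x : ℕ → ℝ) : ℝ :=
  ∑ ℓ : Fin (n + 1) → Fin (n + 1),
    if (ℓ 0 : ℕ) = 0 ∧ (∑ i : Fin (n + 1), (i : ℕ) * (ℓ i : ℕ)) = n ∧ (∑ i : Fin (n + 1), (ℓ i : ℕ)) = k then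
      (n.factorial : ℝ) / (∏ i : Fin (n + 1), ((ℓ i : ℕ).factorial : ℝ)) *
        ∏ i : Fin (n + 1), (x (i : ℕ) / ((i : ℕ).factorial : ℝ)) ^ (ℓ i : ℕ)
    else 0

/-- Stirling numbers of the second kind (real-valued), with
`stirlingS 0 0 = 1` and `stirlingS n 0 = 0` for `n ≥ 1`. -/
noncomputable def stirlingS (n k : ℕ) : ℝ :=
  (1 / (k.factorial : ℝ)) *
    ∑ l ∈ Finset.range (k + 1), (-1 : ℝ) ^ (k - l) * (k.choose l) * (l : ℝ) ^ n

open PowerSeries Nat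

section
variable {R : Type*} [CommSemiring R]

theorem PowerSeries.coeff_pow_eq_coeff_trunc_pow (f : R⟦X⟧) (n k : ℕ) :
    coeff n (f ^ k) = coeff n ((trunc (n + 1) f : R⟦X⟧) ^ k) := by
  rw [← coeff_coe_trunc_of_lt (lt_add_one n) (f := (trunc (n + 1) f : R⟦X⟧) ^ k),
    trunc_trunc_pow, coeff_coe_trunc_of_lt (lt_add_one n)]

theorem PowerSeries.coe_trunc_eq_sum_range (f : R⟦X⟧) (n : ℕ) :
    (trunc n f : R⟦X⟧) = ∑ i ∈ range n, monomial i (coeff i f) := by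
  ext m
  simp [coeff_trunc, coeff_monomial]

theorem PowerSeries.coeff_sum_monomial_pow {ι : Type*} [DecidableEq ι] (s : Finset ι)
    (e : ι → ℕ) (a : ι → R) (n k : ℕ) :
    coeff n ((∑ i ∈ s, monomial (e i) (a i)) ^ k) =
      ∑ g ∈ piAntidiag s k with ∑ i ∈ s, e i * g i = n,
        (multinomial s g : R) * ∏ i ∈ s, a i ^ g i := by
  rw [sum_pow_eq_sum_piAntidiag, map_sum, sum_filter]
  refine sum_congr rfl fun g _ => ?_
  simp_rw [monomial_pow, prod_monomial]
  rw [← map_natCast (C (R := R)), coeff_C_mul, coeff_monomial]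
  simp_rw [mul_comm (g _)]
  rw [mul_ite, mul_zero]
  exact if_congr eq_comm rfl rfl
end

noncomputable def egf (x : ℕ → ℝ) : ℝ⟦X⟧ := mk fun i => if i = 0 then 0 else x i / i !

theorem coeff_egf_pow (x : ℕ → ℝ) (n k : ℕ) :
    coeff n (egf x ^ k) =
      coeff n ((∑ i ∈ univ.erase (0 : Fin (n + 1)), monomial i (x i / (i : ℕ)!)) ^ k) := by
  rw [coeff_pow_eq_coeff_trunc_pow, coe_trunc_eq_sum_range,
    ← Fin.sum_univ_eq_sum_range (fun i => monomial i (coeff i (egf x))),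
    ← sum_erase univ (a := 0) (by simp [egf])]
  congr 2
  refine sum_congr rfl fun i hi => ?_
  rw [egf, coeff_mk, if_neg (Fin.val_ne_zero_iff.mpr (ne_of_mem_erase hi))]

theorem apply_le_of_mem_piAntidiag_erase_zero {n k : ℕ} {g : Fin (n + 1) → ℕ}
    (hg : g ∈ piAntidiag (univ.erase 0) k)
    (hw : ∑ i ∈ univ.erase (0 : Fin (n + 1)), (i : ℕ) * g i = n) :
    ∀ i, g i ≤ n := by
  intro i
  by_cases hi : i ∈ univ.erase 0
  · calc g i ≤ i * g i := Nat.le_mul_of_pos_left _ (Fin.pos_iff_ne_zero.mpr (ne_of_mem_erase hi))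
      _ ≤ ∑ j ∈ univ.erase (0 : Fin (n + 1)), (j : ℕ) * g j :=
          single_le_sum (f := fun j : Fin (n + 1) => (j : ℕ) * g j) (fun _ _ => Nat.zero_le _) hi
      _ = n := hw
  · rw [show g i = 0 from by_contra fun h => hi ((mem_piAntidiag.mp hg).2 i h)]
    exact Nat.zero_le n

theorem factorial_mul_div_prod_factorial_mul_prod {n k : ℕ} (x : ℕ → ℝ)
    {g : Fin (n + 1) → ℕ} (h0 : g 0 = 0) (hs : ∑ i, g i = k) :
    k ! * (n ! / (∏ i, ((g i)! : ℝ)) * ∏ i : Fin (n + 1), (x i / (i : ℕ)!) ^ g i) =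
      n ! * ((multinomial (univ.erase 0) g : ℝ) *
        ∏ i ∈ univ.erase (0 : Fin (n + 1)), (x i / (i : ℕ)!) ^ g i) := by
  rw [← prod_erase univ (a := 0) (f := fun i => ((g i)! : ℝ)) (by simp [h0]),
    ← prod_erase univ (a := 0) (f := fun i : Fin (n + 1) => (x i / (i : ℕ)!) ^ g i)
      (by simp [h0])]
  have hmult : (∏ i ∈ univ.erase 0, ((g i)! : ℝ)) * multinomial (univ.erase 0) g = k ! := by
    rw [← (sum_erase univ h0).trans hs]
    exact_mod_cast multinomial_spec _ g
  rw [← hmult]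
  have : ∏ i ∈ univ.erase 0, ((g i)! : ℝ) ≠ 0 := by positivity
  field_simp

theorem factorial_mul_bellB_eq_sum_piAntidiag (n k : ℕ) (x : ℕ → ℝ) :
    k ! * bellB n k x = n ! * ∑ g ∈ piAntidiag (univ.erase (0 : Fin (n + 1))) k
        with ∑ i ∈ univ.erase (0 : Fin (n + 1)), (i : ℕ) * g i = n,
        (multinomial (univ.erase 0) g : ℝ) *
          ∏ i ∈ univ.erase (0 : Fin (n + 1)), (x i / (i : ℕ)!) ^ g i := by
  rw [bellB, ← sum_filter, mul_sum, mul_sum]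
  refine sum_nbij' (fun ℓ i => (ℓ i : ℕ)) (fun g i => Fin.ofNat (n + 1) (g i)) ?_ ?_ ?_ ?_ ?_
  · intro ℓ hℓ
    simp only [mem_filter, mem_univ, true_and, mem_piAntidiag] at hℓ ⊢
    obtain ⟨h0, hw, hs⟩ := hℓ
    refine ⟨⟨?_, fun i hi => mem_erase.mpr ⟨?_, mem_univ i⟩⟩, ?_⟩
    · exact (sum_erase univ (f := fun i => (ℓ i : ℕ)) h0).trans hs
    · rintro rfl; exact hi h0
    · exact (sum_erase univ (f := fun i : Fin (n + 1) => (i : ℕ) * ℓ i) (by simp)).trans hw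
  · intro g hg
    obtain ⟨hg, hw⟩ := mem_filter.mp hg
    have h0 : g 0 = 0 := by_contra fun h => notMem_erase 0 univ ((mem_piAntidiag.mp hg).2 0 h)
    simp only [mem_filter, mem_univ, true_and, Fin.val_ofNat,
      Nat.mod_eq_of_lt (Nat.lt_succ_of_le (apply_le_of_mem_piAntidiag_erase_zero hg hw _))]
    refine ⟨h0, ?_, ?_⟩
    · exact (sum_erase univ (f := fun i : Fin (n + 1) => (i : ℕ) * g i) (by simp)).symm.trans hw
    · exact (sum_erase univ (f := g) h0).symm.trans (mem_piAntidiag.mp hg).1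
  · intro ℓ _
    funext i
    exact Fin.ofNat_val_eq_self _
  · intro g hg
    obtain ⟨hg, hw⟩ := mem_filter.mp hg
    funext i
    rw [Fin.val_ofNat,
      Nat.mod_eq_of_lt (Nat.lt_succ_of_le (apply_le_of_mem_piAntidiag_erase_zero hg hw i))]
  · intro ℓ hℓ
    simp only [mem_filter, mem_univ, true_and] at hℓ
    exact factorial_mul_div_prod_factorial_mul_prod x hℓ.1 hℓ.2.2

theorem factorial_mul_bellB_eq_coeff_egf_pow (n k : ℕ) (x : ℕ → ℝ) :
    k ! * bellB n k x = n ! * coeff n (egf x ^ k) := by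
  rw [factorial_mul_bellB_eq_sum_piAntidiag, coeff_egf_pow, coeff_sum_monomial_pow]

theorem X_mul_egf_inv_succ : X * egf (fun i => 1 / ((i : ℝ) + 1)) = exp ℝ - 1 - X := by
  ext (_ | _ | m)
  · simp
  · simp [egf, coeff_succ_X_mul]
  · rw [coeff_succ_X_mul, egf, coeff_mk, if_neg m.succ_ne_zero]
    simp only [cast_add, cast_one, one_div, factorial_succ, cast_mul, map_sub, coeff_exp,
      mul_inv_rev, eq_ratCast, Rat.cast_mul, Rat.cast_inv, Rat.cast_natCast, Rat.cast_add,
      Rat.cast_one, coeff_one, Nat.add_eq_zero_iff, one_ne_zero, and_false, and_self, if_false,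
      sub_zero, coeff_X, Nat.add_eq_right]
    field_simp

theorem coeff_exp_sub_one_pow (m l : ℕ) :
    coeff m ((exp ℝ - 1) ^ l) = l ! / m ! * stirlingS m l := by
  have hterm : ∀ j, coeff m (exp ℝ ^ j * (-1) ^ (l - j) * (l.choose j : ℝ⟦X⟧)) =
      (-1 : ℝ) ^ (l - j) * l.choose j * (j : ℝ) ^ m / m ! := by
    intro j
    rw [exp_pow_eq_rescale_exp, ← map_one C, ← map_neg, ← map_pow, ← map_natCast C,
      mul_assoc, ← map_mul, coeff_mul_C, coeff_rescale, coeff_exp]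
    simp only [one_div, map_inv₀, map_natCast]
    ring
  rw [sub_eq_add_neg, add_pow, map_sum, sum_congr rfl fun j _ => hterm j, stirlingS, ← sum_div]
  field_simp

theorem coeff_exp_sub_one_sub_X_pow (n k : ℕ) :
    coeff (n + k) ((exp ℝ - 1 - X) ^ k) =
      k ! * ∑ l ∈ range (k + 1),
        (-1 : ℝ) ^ (k - l) / ((k - l)! * (n + l)!) * stirlingS (n + l) l := by
  rw [sub_eq_add_neg _ X, add_pow, map_sum, mul_sum]
  refine sum_congr rfl fun l hl => ?_
  have hlk : l ≤ k := Nat.le_of_lt_succ (mem_range.mp hl)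
  have hsplit : (exp ℝ - 1) ^ l * (-X) ^ (k - l) * (k.choose l : ℝ⟦X⟧) =
      C ((-1 : ℝ) ^ (k - l) * k.choose l) * (exp ℝ - 1) ^ l * X ^ (k - l) := by
    rw [neg_pow, map_mul, map_pow, map_neg, map_one, map_natCast]
    ring
  rw [hsplit, show n + k = n + l + (k - l) by omega, coeff_mul_X_pow, coeff_C_mul,
    coeff_exp_sub_one_pow]
  have hchoose : (k.choose l : ℝ) * l ! * (k - l)! = k ! := by
    exact_mod_cast Nat.choose_mul_factorial_mul_factorial hlk
  rw [← hchoose]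
  field_simp

theorem stmt_5_general (n k : ℕ) :
    bellB n k (fun i => 1 / ((i : ℝ) + 1)) =
      (n.factorial : ℝ) *
        ∑ l ∈ Finset.range (k + 1),
          (-1 : ℝ) ^ (k - l) / (((k - l).factorial : ℝ) * ((n + l).factorial : ℝ)) *
            stirlingS (n + l) l := by
  apply mul_left_cancel₀ (show (k ! : ℝ) ≠ 0 by positivity)
  rw [factorial_mul_bellB_eq_coeff_egf_pow, ← coeff_X_pow_mul _ k n, ← mul_pow,
    X_mul_egf_inv_succ, coeff_exp_sub_one_sub_X_pow]
  ring

theorem stmt_5 (n k : ℕ) (hk : 1 ≤ k) (hkn : k ≤ n) :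
    bellB n k (fun i => 1 / ((i : ℝ) + 1)) =
      (n.factorial : ℝ) *
        ∑ l ∈ Finset.range (k + 1),
          (-1 : ℝ) ^ (k - l) / (((k - l).factorial : ℝ) * ((n + l).factorial : ℝ)) *
            stirlingS (n + l) l :=
  stmt_5_general n k
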